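/- arXiv:1901.02112 — 5 statements merged into one kernel-verified Lean document; each statement's English description precedes it below -/
import Mathlib

section
/- Assume r^j ∈ recc(C) for every j ∈ N₀. Then every point x = x̄ + Σ_{j∈N} x_j r^j of P^B ∖ C (with all x_j ≥ 0) satisfies at least one of the two inequalities Σ_{j∈N} x_j/λ⁻_j ≤ 1 or Σ_{j∈N} x_j/λ⁺_j ≥ 1 (using the convention x/(±∞) := 0). -/
/-
Put `a_j = 1/λ⁻_j` and `b_j = 1/λ⁺_j`. For a direction whose halfline meets `C`, openness and
`x̄ ∉ cl C` give `0 ≤ b_j < a_j`, and convexity gives `x̄ + θ⁻¹ r^j ∈ C` for every `θ ∈ (b_j, a_j)`;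
for `j ∈ N₀` both are `0`. If `Σ c_j b_j < 1 < Σ c_j a_j`, some `θ_j = (1 - t) a_j + t b_j` with
`0 < t < 1` satisfies `Σ c_j θ_j = 1`, and then `x̄ + Σ_{j ∉ N₀} c_j r^j` is the convex combination
of the points `x̄ + θ_j⁻¹ r^j` with weights `c_j θ_j`, hence lies in `C`. Adding the recession
directions `r^j`, `j ∈ N₀`, keeps it in `C`, so `x ∈ C`.
-/

open Set Pointwise

noncomputable section

variable {n : ℕ} {ι : Type*} [Fintype ι]

/-- Recession cone of a set `A`. -/
def recc (A : Set (Fin n → ℝ)) : Set (Fin n → ℝ) :=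
  {d | ∀ a ∈ A, ∀ t : ℝ, 0 ≤ t → a + t • d ∈ A}

/-- The translated simplicial cone `P^B = {x̄ + Σ_j x_j r^j : x_j ≥ 0}`. -/
def PBset (xb : Fin n → ℝ) (r : ι → Fin n → ℝ) : Set (Fin n → ℝ) :=
  {x | ∃ c : ι → ℝ, (∀ j, 0 ≤ c j) ∧ x = xb + ∑ j, c j • r j}

/-- The recession cone of `P^B`, i.e. `{Σ_j t_j r^j : t_j ≥ 0}`. -/
def reccPBset (r : ι → Fin n → ℝ) : Set (Fin n → ℝ) :=
  {x | ∃ t : ι → ℝ, (∀ j, 0 ≤ t j) ∧ x = ∑ j, t j • r j}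

/-- `λ⁻ = inf {λ ≥ 0 : x̄ + λ d ∈ C}` (`+∞` if the halfline misses `C`). -/
noncomputable def lamM (xb d : Fin n → ℝ) (C : Set (Fin n → ℝ)) : EReal :=
  sInf ((fun l : ℝ => (l : EReal)) '' {l : ℝ | 0 ≤ l ∧ xb + l • d ∈ C})

/-- `λ⁺ = sup {λ ≥ 0 : x̄ + λ d ∈ C}` (`−∞` if the halfline misses `C`). -/
noncomputable def lamP (xb d : Fin n → ℝ) (C : Set (Fin n → ℝ)) : EReal :=
  sSup ((fun l : ℝ => (l : EReal)) '' {l : ℝ | 0 ≤ l ∧ xb + l • d ∈ C})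

/-- `N₀`: indices whose halfline misses `C`. -/
def N0set (xb : Fin n → ℝ) (r : ι → Fin n → ℝ) (C : Set (Fin n → ℝ)) : Set ι :=
  {j | ∀ l : ℝ, 0 ≤ l → xb + l • r j ∉ C}

/-- `N₁`: indices with `0 < λ⁻ < +∞` and `λ⁺ = +∞`. -/
def N1set (xb : Fin n → ℝ) (r : ι → Fin n → ℝ) (C : Set (Fin n → ℝ)) : Set ι :=
  {j | 0 < lamM xb (r j) C ∧ lamM xb (r j) C < ⊤ ∧ lamP xb (r j) C = ⊤}

/-- `N₂`: indices with `0 < λ⁻ < +∞` and `λ⁻ < λ⁺ < +∞`. -/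
def N2set (xb : Fin n → ℝ) (r : ι → Fin n → ℝ) (C : Set (Fin n → ℝ)) : Set ι :=
  {j | 0 < lamM xb (r j) C ∧ lamM xb (r j) C < ⊤ ∧
    lamM xb (r j) C < lamP xb (r j) C ∧ lamP xb (r j) C < ⊤}

namespace EReal

lemma inv_toReal_nonneg {x : EReal} (hx : 0 ≤ x) : 0 ≤ x.toReal⁻¹ :=
  inv_nonneg.2 (toReal_nonneg hx)

lemma inv_toReal_lt_inv_toReal {x y : EReal} (hx : 0 < x) (hx' : x ≠ ⊤) (hxy : x < y) :
    y.toReal⁻¹ < x.toReal⁻¹ := by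
  lift x to ℝ using ⟨hx', hx.ne_bot⟩
  induction y using EReal.rec with
  | bot => exact absurd hxy not_lt_bot
  | top => simpa using EReal.coe_pos.1 hx
  | coe y =>
    simp only [toReal_coe]
    exact inv_strictAnti₀ (EReal.coe_pos.1 hx) (EReal.coe_lt_coe_iff.1 hxy)

lemma coe_inv_lt_of_inv_toReal_lt {x : EReal} (hx : 0 < x) {θ : ℝ} (h : x.toReal⁻¹ < θ) :
    ((θ⁻¹ : ℝ) : EReal) < x := by
  induction x using EReal.rec with
  | bot => exact absurd hx not_lt_bot
  | top => exact coe_lt_top _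
  | coe x =>
    rw [toReal_coe] at h
    exact EReal.coe_lt_coe_iff.2 (inv_lt_of_inv_lt₀ (EReal.coe_pos.1 hx) h)

lemma lt_coe_inv_of_lt_inv_toReal {x : EReal} (hx : 0 < x) (hx' : x ≠ ⊤) {θ : ℝ} (hθ : 0 < θ)
    (h : θ < x.toReal⁻¹) : x < ((θ⁻¹ : ℝ) : EReal) := by
  lift x to ℝ using ⟨hx', hx.ne_bot⟩
  rw [toReal_coe] at h
  exact EReal.coe_lt_coe_iff.2 (lt_inv_of_lt_inv₀ hθ h)

end EReal

section Halfline

variable {xb d : Fin n → ℝ} {C : Set (Fin n → ℝ)} {l : ℝ}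

lemma lamM_eq_top_of_forall_notMem (h : ∀ l : ℝ, 0 ≤ l → xb + l • d ∉ C) :
    lamM xb d C = ⊤ := by
  have : {l : ℝ | 0 ≤ l ∧ xb + l • d ∈ C} = ∅ :=
    eq_empty_of_forall_notMem fun l hl => h l hl.1 hl.2
  simp [lamM, this]

lemma lamP_eq_bot_of_forall_notMem (h : ∀ l : ℝ, 0 ≤ l → xb + l • d ∉ C) :
    lamP xb d C = ⊥ := by
  have : {l : ℝ | 0 ≤ l ∧ xb + l • d ∈ C} = ∅ :=
    eq_empty_of_forall_notMem fun l hl => h l hl.1 hl.2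
  simp [lamP, this]

lemma lamM_le (hl : 0 ≤ l) (hlC : xb + l • d ∈ C) : lamM xb d C ≤ l :=
  sInf_le ⟨l, ⟨hl, hlC⟩, rfl⟩

lemma le_lamP (hl : 0 ≤ l) (hlC : xb + l • d ∈ C) : (l : EReal) ≤ lamP xb d C :=
  le_sSup ⟨l, ⟨hl, hlC⟩, rfl⟩

lemma lamM_pos (hxb : xb ∉ closure C) : 0 < lamM xb d C := by
  have hopen : IsOpen ((fun l : ℝ => xb + l • d) ⁻¹' (closure C)ᶜ) :=
    isClosed_closure.isOpen_compl.preimage (by fun_prop)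
  obtain ⟨ε, hε, hball⟩ := Metric.isOpen_iff.1 hopen 0 (by simpa using hxb)
  refine (EReal.coe_pos.2 hε).trans_le (le_sInf ?_)
  rintro _ ⟨l, ⟨hl, hlC⟩, rfl⟩
  refine EReal.coe_le_coe_iff.2 (not_lt.1 fun hlε => hball ?_ (subset_closure hlC))
  rwa [Metric.mem_ball, Real.dist_0_eq_abs, abs_of_nonneg hl]

lemma lamM_lt_lamP (hC : IsOpen C) (hl : 0 ≤ l) (hlC : xb + l • d ∈ C) :
    lamM xb d C < lamP xb d C := by
  have hopen : IsOpen ((fun l : ℝ => xb + l • d) ⁻¹' C) := hC.preimage (by fun_prop)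
  obtain ⟨δ, hδ, hball⟩ := Metric.isOpen_iff.1 hopen l hlC
  have hδC : xb + (l + δ / 2) • d ∈ C :=
    hball (by rw [Metric.mem_ball, Real.dist_eq, add_sub_cancel_left, abs_of_pos] <;> linarith)
  calc lamM xb d C ≤ l := lamM_le hl hlC
    _ < (l + δ / 2 : ℝ) := EReal.coe_lt_coe_iff.2 (by linarith)
    _ ≤ lamP xb d C := le_lamP (by linarith) hδC

lemma add_smul_mem_of_lamM_lt_of_lt_lamP (hC : Convex ℝ C) (hM : lamM xb d C < l)
    (hP : (l : EReal) < lamP xb d C) : xb + l • d ∈ C := by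
  obtain ⟨_, ⟨l₁, ⟨-, hl₁C⟩, rfl⟩, hl₁⟩ := sInf_lt_iff.1 hM
  obtain ⟨_, ⟨l₂, ⟨-, hl₂C⟩, rfl⟩, hl₂⟩ := lt_sSup_iff.1 hP
  have hconv : Convex ℝ ((fun l : ℝ => xb + l • d) ⁻¹' C) :=
    (hC.translate_preimage_right xb).is_linear_preimage (IsLinearMap.isLinearMap_smul' d)
  exact hconv.ordConnected.out hl₁C hl₂C
    ⟨EReal.coe_le_coe_iff.1 hl₁.le, EReal.coe_le_coe_iff.1 hl₂.le⟩

lemma inv_toReal_lamP_nonneg (hl : 0 ≤ l) (hlC : xb + l • d ∈ C) :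
    0 ≤ (lamP xb d C).toReal⁻¹ :=
  EReal.inv_toReal_nonneg ((EReal.coe_nonneg.2 hl).trans (le_lamP hl hlC))

lemma inv_toReal_lamP_lt_inv_toReal_lamM (hC : IsOpen C) (hxb : xb ∉ closure C) (hl : 0 ≤ l)
    (hlC : xb + l • d ∈ C) : (lamP xb d C).toReal⁻¹ < (lamM xb d C).toReal⁻¹ :=
  EReal.inv_toReal_lt_inv_toReal (lamM_pos hxb) ((lamM_le hl hlC).trans_lt (EReal.coe_lt_top l)).ne
    (lamM_lt_lamP hC hl hlC)

lemma add_inv_smul_mem (hC : Convex ℝ C) (hxb : xb ∉ closure C) (hl : 0 ≤ l)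
    (hlC : xb + l • d ∈ C) {θ : ℝ}
    (hθ : θ ∈ Ioo (lamP xb d C).toReal⁻¹ (lamM xb d C).toReal⁻¹) : xb + θ⁻¹ • d ∈ C := by
  have hM : 0 < lamM xb d C := lamM_pos hxb
  have hMl : lamM xb d C ≤ l := lamM_le hl hlC
  have hP : 0 < lamP xb d C := hM.trans_le (hMl.trans (le_lamP hl hlC))
  have hθ₀ : 0 < θ := (inv_toReal_lamP_nonneg hl hlC).trans_lt hθ.1
  exact add_smul_mem_of_lamM_lt_of_lt_lamP hC
    (EReal.lt_coe_inv_of_lt_inv_toReal hM (hMl.trans_lt (EReal.coe_lt_top l)).ne hθ₀ hθ.2)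
    (EReal.coe_inv_lt_of_inv_toReal_lt hP hθ.1)

end Halfline

lemma exists_mem_Ioo_sum_mul_eq_one {κ : Type*} {s : Finset κ} {a b c : κ → ℝ}
    (hba : ∀ j ∈ s, b j < a j) (hb : ∑ j ∈ s, c j * b j < 1) (ha : 1 < ∑ j ∈ s, c j * a j) :
    ∃ θ : κ → ℝ, (∀ j ∈ s, θ j ∈ Ioo (b j) (a j)) ∧ ∑ j ∈ s, c j * θ j = 1 := by
  set A := ∑ j ∈ s, c j * a j
  set B := ∑ j ∈ s, c j * b j
  set t := (A - 1) / (A - B)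
  have ht₀ : 0 < t := div_pos (by linarith) (by linarith)
  have ht₁ : t < 1 := (div_lt_one (by linarith)).2 (by linarith)
  refine ⟨fun j => (1 - t) * a j + t * b j, fun j hj => ⟨?_, ?_⟩, ?_⟩
  · nlinarith [hba j hj]
  · nlinarith [hba j hj]
  · have hsum : ∑ j ∈ s, c j * ((1 - t) * a j + t * b j) = (1 - t) * A + t * B := by
      simp only [A, B, Finset.mul_sum, ← Finset.sum_add_distrib]
      exact Finset.sum_congr rfl fun j _ => by ring
    have ht : t * (A - B) = A - 1 := div_mul_cancel₀ _ (by linarith)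
    linarith

lemma Convex.add_sum_smul_mem {κ E : Type*} [AddCommGroup E] [Module ℝ E] {C : Set E}
    (hC : Convex ℝ C) {s : Finset κ} {x : E} {r : κ → E} {c θ : κ → ℝ} (hc : ∀ j ∈ s, 0 ≤ c j) (hθ : ∀ j ∈ s, 0 < θ j)
    (hsum : ∑ j ∈ s, c j * θ j = 1) (hmem : ∀ j ∈ s, x + (θ j)⁻¹ • r j ∈ C) :
    x + ∑ j ∈ s, c j • r j ∈ C := by
  have hcomb := hC.sum_mem (fun j hj => mul_nonneg (hc j hj) (hθ j hj).le) hsum hmem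
  have hterm : ∀ j ∈ s, (c j * θ j) • (x + (θ j)⁻¹ • r j) = (c j * θ j) • x + c j • r j := by
    intro j hj
    rw [smul_add, smul_smul, mul_assoc, mul_inv_cancel₀ (hθ j hj).ne', mul_one]
  rwa [Finset.sum_congr rfl hterm, Finset.sum_add_distrib, ← Finset.sum_smul, hsum, one_smul]
    at hcomb

lemma add_sum_smul_mem_of_mem_recc {κ : Type*} {C : Set (Fin n → ℝ)} {s : Finset κ}
    {w : Fin n → ℝ} (hw : w ∈ C) {t : κ → ℝ} {d : κ → Fin n → ℝ} (ht : ∀ j ∈ s, 0 ≤ t j)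
    (hd : ∀ j ∈ s, d j ∈ recc C) : w + ∑ j ∈ s, t j • d j ∈ C := by
  classical
  induction s using Finset.induction_on with
  | empty => simpa using hw
  | insert i s hi ih =>
    have hs : w + ∑ j ∈ s, t j • d j ∈ C :=
      ih (fun j hj => ht j (Finset.mem_insert_of_mem hj))
        fun j hj => hd j (Finset.mem_insert_of_mem hj)
    rw [Finset.sum_insert hi, add_comm (t i • d i), ← add_assoc]
    exact hd i (Finset.mem_insert_self i s) _ hs _ (ht i (Finset.mem_insert_self i s))

theorem stmt0_general (xb : Fin n → ℝ) (r : ι → Fin n → ℝ)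
    (C : Set (Fin n → ℝ)) (hCopen : IsOpen C) (hCconv : Convex ℝ C)
    (hxb : xb ∉ closure C)
    (hN0 : ∀ j ∈ N0set xb r C, r j ∈ recc C)
    (c : ι → ℝ) (hc : ∀ j, 0 ≤ c j)
    (hxC : xb + ∑ j, c j • r j ∉ C) :
    (∑ j, c j / (lamM xb (r j) C).toReal ≤ 1) ∨
      (1 ≤ ∑ j, c j / (lamP xb (r j) C).toReal) := by
  classical
  by_contra! h
  set s := Finset.univ.filter (· ∉ N0set xb r C)
  have hmeets : ∀ j ∈ s, ∃ l : ℝ, 0 ≤ l ∧ xb + l • r j ∈ C := fun j hj => by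
    simpa [s, N0set] using hj
  choose! l hl hlC using hmeets
  have hM : ∑ j ∈ s, c j * (lamM xb (r j) C).toReal⁻¹ = ∑ j, c j / (lamM xb (r j) C).toReal := by
    simp_rw [div_eq_mul_inv]
    exact Finset.sum_filter_of_ne fun j _ hj hN0 => hj (by simp [lamM_eq_top_of_forall_notMem hN0])
  have hP : ∑ j ∈ s, c j * (lamP xb (r j) C).toReal⁻¹ = ∑ j, c j / (lamP xb (r j) C).toReal := by
    simp_rw [div_eq_mul_inv]
    exact Finset.sum_filter_of_ne fun j _ hj hN0 => hj (by simp [lamP_eq_bot_of_forall_notMem hN0])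
  obtain ⟨θ, hθ, hθsum⟩ := exists_mem_Ioo_sum_mul_eq_one
    (fun j hj => inv_toReal_lamP_lt_inv_toReal_lamM hCopen hxb (hl j hj) (hlC j hj))
    (hP ▸ h.2) (hM ▸ h.1)
  have hmem : xb + ∑ j ∈ s, c j • r j ∈ C :=
    hCconv.add_sum_smul_mem (fun j _ => hc j)
      (fun j hj => (inv_toReal_lamP_nonneg (hl j hj) (hlC j hj)).trans_lt (hθ j hj).1) hθsum
      fun j hj => add_inv_smul_mem hCconv hxb (hl j hj) (hlC j hj) (hθ j hj)
  apply hxC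
  rw [← Finset.sum_filter_add_sum_filter_not Finset.univ (· ∉ N0set xb r C), ← add_assoc]
  exact add_sum_smul_mem_of_mem_recc hmem (fun j _ => hc j)
    fun j hj => hN0 j (not_not.1 (Finset.mem_filter.1 hj).2)

/-- Theorem 1, two-term intersection disjunction.
Under the assumption that `r^j ∈ recc(C)` for every `j ∈ N₀`, every point
`x = x̄ + Σ_j x_j r^j` of `P^B ∖ C` satisfies `Σ_j x_j/λ⁻_j ≤ 1` or `Σ_j x_j/λ⁺_j ≥ 1`
(convention `x/(±∞) := 0`, realized via `EReal.toReal (±∞) = 0` and `x/0 = 0`). -/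
theorem stmt0 (xb : Fin n → ℝ) (r : ι → Fin n → ℝ) (hr : LinearIndependent ℝ r)
    (C : Set (Fin n → ℝ)) (hCopen : IsOpen C) (hCconv : Convex ℝ C)
    (hxb : xb ∉ closure C)
    (hN0 : ∀ j ∈ N0set xb r C, r j ∈ recc C)
    (c : ι → ℝ) (hc : ∀ j, 0 ≤ c j)
    (hxC : xb + ∑ j, c j • r j ∉ C) :
    (∑ j, c j / (lamM xb (r j) C).toReal ≤ 1) ∨
      (1 ≤ ∑ j, c j / (lamP xb (r j) C).toReal) :=
  stmt0_general xb r C hCopen hCconv hxb hN0 c hc hxC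
end
end

section
/- Assume r^j ∈ recc(C) for every j ∈ N₀ and assume C is bounded. Then conv({x ∈ P^B ∖ C : Σ_{j∈N} x_j/λ⁻_j ≤ 1}) = {x ∈ P^B : Σ_{j∈N} x_j/λ⁻_j ≤ 1}, and conv({x ∈ P^B ∖ C : Σ_{j∈N} x_j/λ⁺_j ≥ 1}) = {x ∈ P^B : Σ_{j∈N} x_j/λ⁺_j ≥ 1}, where each x ∈ P^B is written as x = x̄ + Σ_{j∈N} x_j r^j with all x_j ≥ 0 (using the convention x/(±∞) := 0). -/
open Set Pointwise

noncomputable section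

variable {n : ℕ} {ι : Type*} [Fintype ι]

/-!
If `C` is empty there is nothing to show. Otherwise `C` is bounded and nonempty, so its recession
cone is `{0}`, which contains no `r^j`; by the hypothesis on `N₀` every ray `x̄ + ℝ≥0 r^j` then
meets `C`. The parameters of the meeting points form a bounded open set, bounded away from `0`
because `x̄ ∉ cl C`, so `0 < λ⁻_j ≤ λ⁺_j < ∞` and the points `x̄ + λ^±_j r^j` lie outside `C`.

The set `{x ∈ P^B : Σ x_j/λ⁻_j ≤ 1}` is the simplex with vertices `x̄` and `x̄ + λ⁻_j r^j`, all
outside `C`. A point `x = x̄ + v ∈ C` with `s = Σ x_j/λ⁺_j ≥ 1` lies on the segment from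
`x̄ + s⁻¹ v`, a convex combination of the points `x̄ + λ⁺_j r^j`, to a point `x̄ + M v` (`M ≥ 1`)
beyond the bounded set `C`.
-/

section OpenSet

variable {α : Type*} [ConditionallyCompleteLinearOrder α] [TopologicalSpace α] [OrderTopology α]
  [DenselyOrdered α] {L : Set α}

lemma IsOpen.csInf_notMem [NoMinOrder α] (hL : IsOpen L) (hb : BddBelow L) : sInf L ∉ L :=
  fun h =>
    let ⟨_, hlt, hmem⟩ := Filter.Eventually.exists_lt (hL.mem_nhds h)
    (csInf_le hb hmem).not_gt hlt

lemma IsOpen.csSup_notMem [NoMaxOrder α] (hL : IsOpen L) (hb : BddAbove L) : sSup L ∉ L :=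
  fun h =>
    let ⟨_, hlt, hmem⟩ := Filter.Eventually.exists_gt (hL.mem_nhds h)
    (le_csSup hb hmem).not_gt hlt

end OpenSet

section Ray

variable {E : Type*} [NormedAddCommGroup E] [NormedSpace ℝ E] {C : Set E} {xb d : E}

def rayParams (xb d : E) (C : Set E) : Set ℝ := {l | 0 ≤ l ∧ xb + l • d ∈ C}

lemma bddAbove_setOf_add_smul_mem (hC : Bornology.IsBounded C) (xb : E) (hd : d ≠ 0) :
    BddAbove {t : ℝ | xb + t • d ∈ C} := by
  obtain ⟨R, hR⟩ := hC.subset_closedBall xb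
  refine ⟨R / ‖d‖, fun t ht => ?_⟩
  have hdist := hR ht
  rw [Metric.mem_closedBall, dist_eq_norm, add_sub_cancel_left, norm_smul,
    Real.norm_eq_abs] at hdist
  rw [le_div_iff₀ (norm_pos_iff.2 hd)]
  exact (mul_le_mul_of_nonneg_right (le_abs_self t) (norm_nonneg d)).trans hdist

lemma exists_add_smul_notMem (hC : Bornology.IsBounded C) (xb : E) (hd : d ≠ 0) (T : ℝ) :
    ∃ M, T ≤ M ∧ xb + M • d ∉ C := by
  obtain ⟨b, hb⟩ := bddAbove_setOf_add_smul_mem hC xb hd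
  refine ⟨max T (b + 1), le_max_left _ _, fun h => ?_⟩
  linarith [hb h, le_max_right T (b + 1)]

lemma ne_zero_of_rayParams_nonempty (hxb : xb ∉ C) (hne : (rayParams xb d C).Nonempty) :
    d ≠ 0 := by
  rintro rfl
  obtain ⟨l, -, hl⟩ := hne
  exact hxb (by simpa using hl)

lemma bddAbove_rayParams (hC : Bornology.IsBounded C) (hxb : xb ∉ C)
    (hne : (rayParams xb d C).Nonempty) : BddAbove (rayParams xb d C) :=
  (bddAbove_setOf_add_smul_mem hC xb (ne_zero_of_rayParams_nonempty hxb hne)).mono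
    fun _ hl => hl.2

lemma bddBelow_rayParams : BddBelow (rayParams xb d C) := ⟨0, fun _ hl => hl.1⟩

lemma isOpen_rayParams (hC : IsOpen C) (hxb : xb ∉ C) : IsOpen (rayParams xb d C) := by
  have hL : rayParams xb d C = Ioi 0 ∩ (fun l : ℝ => xb + l • d) ⁻¹' C := by
    ext l
    refine ⟨fun ⟨hl0, hl⟩ => ⟨hl0.lt_of_ne ?_, hl⟩, fun ⟨hl0, hl⟩ => ⟨hl0.le, hl⟩⟩
    rintro rfl
    exact hxb (by simpa using hl)
  rw [hL]
  exact isOpen_Ioi.inter (hC.preimage (by fun_prop))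

end Ray

section Lambda

variable {C : Set (Fin n → ℝ)} {xb d : Fin n → ℝ}

lemma lamM_eq_coe_sInf (hne : (rayParams xb d C).Nonempty) :
    lamM xb d C = (sInf (rayParams xb d C) : ℝ) :=
  (Monotone.map_csInf_of_continuousAt continuous_coe_real_ereal.continuousAt
    EReal.coe_strictMono.monotone hne bddBelow_rayParams).symm

lemma lamP_eq_coe_sSup (hne : (rayParams xb d C).Nonempty) (hb : BddAbove (rayParams xb d C)) :
    lamP xb d C = (sSup (rayParams xb d C) : ℝ) :=
  (Monotone.map_csSup_of_continuousAt continuous_coe_real_ereal.continuousAt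
    EReal.coe_strictMono.monotone hne hb).symm

lemma toReal_lamM_pos (hxb : xb ∉ closure C) (hne : (rayParams xb d C).Nonempty) :
    0 < (lamM xb d C).toReal := by
  rw [lamM_eq_coe_sInf hne, EReal.toReal_coe]
  refine (le_csInf hne fun _ hl => hl.1).lt_of_ne fun h0 => hxb ?_
  have := map_mem_closure (f := fun l : ℝ => xb + l • d) (by fun_prop)
    (csInf_mem_closure hne bddBelow_rayParams) fun _ hl => hl.2
  rwa [← h0, zero_smul, add_zero] at this

lemma add_toReal_lamM_smul_notMem (hC : IsOpen C) (hxb : xb ∉ C)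
    (hne : (rayParams xb d C).Nonempty) : xb + (lamM xb d C).toReal • d ∉ C := by
  rw [lamM_eq_coe_sInf hne, EReal.toReal_coe]
  exact fun h => (isOpen_rayParams hC hxb).csInf_notMem bddBelow_rayParams
    ⟨le_csInf hne fun _ hl => hl.1, h⟩

lemma toReal_lamP_pos (hCb : Bornology.IsBounded C) (hxb : xb ∉ closure C)
    (hne : (rayParams xb d C).Nonempty) : 0 < (lamP xb d C).toReal := by
  have hb := bddAbove_rayParams hCb (fun h => hxb (subset_closure h)) hne
  have hpos := toReal_lamM_pos hxb hne
  rw [lamM_eq_coe_sInf hne, EReal.toReal_coe] at hpos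
  rw [lamP_eq_coe_sSup hne hb, EReal.toReal_coe]
  exact hpos.trans_le (csInf_le_csSup hne bddBelow_rayParams hb)

lemma add_toReal_lamP_smul_notMem (hC : IsOpen C) (hCb : Bornology.IsBounded C) (hxb : xb ∉ C)
    (hne : (rayParams xb d C).Nonempty) : xb + (lamP xb d C).toReal • d ∉ C := by
  have hb := bddAbove_rayParams hCb hxb hne
  rw [lamP_eq_coe_sSup hne hb, EReal.toReal_coe]
  obtain ⟨l, hl⟩ := hne
  exact fun h => (isOpen_rayParams hC hxb).csSup_notMem hb
    ⟨hl.1.trans (le_csSup hb hl), h⟩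

lemma eq_zero_of_mem_recc (hC : Bornology.IsBounded C) (hne : C.Nonempty) (hd : d ∈ recc C) :
    d = 0 := by
  by_contra h
  obtain ⟨a, ha⟩ := hne
  obtain ⟨M, hM, hMC⟩ := exists_add_smul_notMem hC a h 0
  exact hMC (hd a ha M hM)

end Lambda

section Cut

variable {E : Type*} [AddCommGroup E] [Module ℝ E] (xb : E) (r : ι → E) (q : ι → ℝ)

lemma add_smul_mem_segment (a v : E) {t₁ t t₂ : ℝ} (h₁ : t₁ ≤ t) (h₂ : t ≤ t₂) :
    a + t • v ∈ segment ℝ (a + t₁ • v) (a + t₂ • v) := by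
  have hline : ∀ s : ℝ, AffineMap.lineMap a (a + v) s = a + s • v := fun s => by
    simp [AffineMap.lineMap_apply, add_comm]
  rw [← hline, ← hline, ← hline, ← image_segment, segment_eq_Icc (h₁.trans h₂)]
  exact mem_image_of_mem _ ⟨h₁, h₂⟩

def PBcut (I : Set ℝ) : Set E :=
  {x | ∃ c : ι → ℝ, (∀ j, 0 ≤ c j) ∧ x = xb + ∑ j, c j • r j ∧ ∑ j, c j / q j ∈ I}

variable {xb r q} {I : Set ℝ}

lemma convex_PBcut (hI : Convex ℝ I) : Convex ℝ (PBcut xb r q I) := by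
  rintro _ ⟨c, hc, rfl, hcI⟩ _ ⟨e, he, rfl, heI⟩ a b ha hb hab
  refine ⟨a • c + b • e, fun j => ?_, ?_, ?_⟩
  · exact add_nonneg (mul_nonneg ha (hc j)) (mul_nonneg hb (he j))
  · simp only [Pi.add_apply, Pi.smul_apply, smul_eq_mul, add_smul, mul_smul, smul_add,
      Finset.sum_add_distrib, ← Finset.smul_sum]
    rw [eq_sub_of_add_eq' hab]
    module
  · convert hI hcI heI ha hb hab using 1
    simp only [Pi.add_apply, Pi.smul_apply, smul_eq_mul, add_div, mul_div_assoc,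
      Finset.sum_add_distrib, ← Finset.mul_sum]

lemma self_mem_PBcut (hI : (0 : ℝ) ∈ I) : xb ∈ PBcut xb r q I :=
  ⟨0, fun _ => le_rfl, by simp, by simpa using hI⟩

lemma add_smul_mem_PBcut {j : ι} (hq : 0 < q j) (hI : (1 : ℝ) ∈ I) :
    xb + q j • r j ∈ PBcut xb r q I := by
  classical
  refine ⟨Pi.single j (q j), fun i => ?_, ?_, ?_⟩
  · by_cases h : i = j
    · subst h; simpa using hq.le
    · simp [h]
  · simp [Pi.single_apply]
  · simpa [Pi.single_apply, ite_div, hq.ne'] using hI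

lemma add_sum_smul_mem_convexHull (hq : ∀ j, 0 < q j) {c : ι → ℝ} (hc : ∀ j, 0 ≤ c j)
    (hs : ∑ j, c j / q j = 1) :
    xb + ∑ j, c j • r j ∈ convexHull ℝ (range fun j => xb + q j • r j) := by
  have hcq : ∀ j, c j / q j * q j = c j := fun j => div_mul_cancel₀ _ (hq j).ne'
  have hx : xb + ∑ j, c j • r j = ∑ j, (c j / q j) • (xb + q j • r j) := by
    simp only [smul_add, smul_smul, hcq, Finset.sum_add_distrib, ← Finset.sum_smul, hs, one_smul]
  rw [hx]
  exact (convex_convexHull ℝ _).sum_mem (fun j _ => div_nonneg (hc j) (hq j).le) hs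
    fun j _ => subset_convexHull ℝ _ (mem_range_self j)

lemma add_sum_smul_mem_convexHull_insert (hq : ∀ j, 0 < q j) {c : ι → ℝ} (hc : ∀ j, 0 ≤ c j)
    (hs : ∑ j, c j / q j ≤ 1) :
    xb + ∑ j, c j • r j ∈ convexHull ℝ (insert xb (range fun j => xb + q j • r j)) := by
  have := add_sum_smul_mem_convexHull (xb := xb) (r := fun o : Option ι => o.elim 0 r)
    (q := fun o : Option ι => o.elim 1 q) (c := fun o : Option ι => o.elim (1 - ∑ j, c j / q j) c)
    (by rintro (_ | j); exacts [one_pos, hq j]) (by rintro (_ | j); exacts [sub_nonneg.2 hs, hc j])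
    (by simp [Fintype.sum_option])
  simpa [Fintype.sum_option, Option.range_eq, Function.comp_def] using this

variable {C : Set E}

lemma convexHull_setOf_notMem_eq {I : Set ℝ} (hI : Convex ℝ I)
    (h : PBcut xb r q I ∩ C ⊆ convexHull ℝ (PBcut xb r q I \ C)) :
    convexHull ℝ {x | ∃ c : ι → ℝ, (∀ j, 0 ≤ c j) ∧ x = xb + ∑ j, c j • r j ∧ x ∉ C ∧
      ∑ j, c j / q j ∈ I} = PBcut xb r q I := by
  have hS : {x | ∃ c : ι → ℝ, (∀ j, 0 ≤ c j) ∧ x = xb + ∑ j, c j • r j ∧ x ∉ C ∧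
      ∑ j, c j / q j ∈ I} = PBcut xb r q I \ C := by
    ext x
    constructor
    · rintro ⟨c, hc, rfl, hxC, hcI⟩
      exact ⟨⟨c, hc, rfl, hcI⟩, hxC⟩
    · rintro ⟨⟨c, hc, rfl, hcI⟩, hxC⟩
      exact ⟨c, hc, rfl, hxC, hcI⟩
  rw [hS]
  refine (convexHull_min sdiff_subset (convex_PBcut hI)).antisymm fun x hx => ?_
  by_cases hxC : x ∈ C
  · exact h ⟨hx, hxC⟩
  · exact subset_convexHull ℝ _ ⟨hx, hxC⟩

lemma PBcut_Iic_subset_convexHull (hq : ∀ j, 0 < q j) (hxb : xb ∉ C)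
    (hend : ∀ j, xb + q j • r j ∉ C) :
    PBcut xb r q (Iic 1) ⊆ convexHull ℝ (PBcut xb r q (Iic 1) \ C) := by
  rintro _ ⟨c, hc, rfl, hs⟩
  refine convexHull_mono ?_ (add_sum_smul_mem_convexHull_insert hq hc hs)
  rintro _ (rfl | ⟨j, rfl⟩)
  · exact ⟨self_mem_PBcut (mem_Iic.2 zero_le_one), hxb⟩
  · exact ⟨add_smul_mem_PBcut (hq j) self_mem_Iic, hend j⟩

end Cut

lemma PBcut_Ici_inter_subset_convexHull {E : Type*} [NormedAddCommGroup E] [NormedSpace ℝ E]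
    {xb : E} {r : ι → E} {q : ι → ℝ} {C : Set E} (hq : ∀ j, 0 < q j) (hC : Bornology.IsBounded C)
    (hxb : xb ∉ C) (hend : ∀ j, xb + q j • r j ∉ C) :
    PBcut xb r q (Ici 1) ∩ C ⊆ convexHull ℝ (PBcut xb r q (Ici 1) \ C) := by
  rintro _ ⟨⟨c, hc, rfl, hs⟩, hxC⟩
  rw [mem_Ici] at hs
  set s := ∑ j, c j / q j
  set v := ∑ j, c j • r j
  have hs0 : 0 < s := one_pos.trans_le hs
  have hv : v ≠ 0 := fun hv => hxb (by simpa [hv] using hxC)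
  have hnear : xb + s⁻¹ • v ∈ convexHull ℝ (PBcut xb r q (Ici 1) \ C) := by
    have hsum : ∑ j, (s⁻¹ • c) j / q j = 1 := by
      simp only [Pi.smul_apply, smul_eq_mul, mul_div_assoc, ← Finset.mul_sum, s]
      exact inv_mul_cancel₀ hs0.ne'
    have hmem := add_sum_smul_mem_convexHull (xb := xb) (r := r) hq
      (fun j => mul_nonneg (inv_nonneg.2 hs0.le) (hc j)) hsum
    simp only [mul_smul, ← Finset.smul_sum] at hmem
    refine convexHull_mono ?_ hmem
    rintro _ ⟨j, rfl⟩
    exact ⟨add_smul_mem_PBcut (hq j) self_mem_Ici, hend j⟩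
  obtain ⟨M, hM, hMC⟩ := exists_add_smul_notMem hC xb hv 1
  have hfar : xb + M • v ∈ PBcut xb r q (Ici 1) := by
    refine ⟨M • c, fun j => mul_nonneg (zero_le_one.trans hM) (hc j), ?_, ?_⟩
    · simp only [Pi.smul_apply, smul_eq_mul, mul_smul, ← Finset.smul_sum, v]
    · simp only [Pi.smul_apply, smul_eq_mul, mul_div_assoc, ← Finset.mul_sum]
      exact one_le_mul_of_one_le_of_one_le hM hs
  simpa using (convex_convexHull ℝ _).segment_subset hnear (subset_convexHull ℝ _ ⟨hfar, hMC⟩)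
    (add_smul_mem_segment xb v (inv_le_one_of_one_le₀ hs) hM)

theorem stmt1_general (xb : Fin n → ℝ) (r : ι → Fin n → ℝ) (hr : LinearIndependent ℝ r)
    (C : Set (Fin n → ℝ)) (hCopen : IsOpen C)
    (hxb : xb ∉ closure C) (hCbdd : Bornology.IsBounded C)
    (hN0 : ∀ j ∈ N0set xb r C, r j ∈ recc C) :
    (convexHull ℝ {x : Fin n → ℝ | ∃ c : ι → ℝ, (∀ j, 0 ≤ c j) ∧
        x = xb + ∑ j, c j • r j ∧ x ∉ C ∧ ∑ j, c j / (lamM xb (r j) C).toReal ≤ 1}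
      = {x : Fin n → ℝ | ∃ c : ι → ℝ, (∀ j, 0 ≤ c j) ∧
        x = xb + ∑ j, c j • r j ∧ ∑ j, c j / (lamM xb (r j) C).toReal ≤ 1}) ∧
    (convexHull ℝ {x : Fin n → ℝ | ∃ c : ι → ℝ, (∀ j, 0 ≤ c j) ∧
        x = xb + ∑ j, c j • r j ∧ x ∉ C ∧ 1 ≤ ∑ j, c j / (lamP xb (r j) C).toReal}
      = {x : Fin n → ℝ | ∃ c : ι → ℝ, (∀ j, 0 ≤ c j) ∧
        x = xb + ∑ j, c j • r j ∧ 1 ≤ ∑ j, c j / (lamP xb (r j) C).toReal}) := by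
  have hxbC : xb ∉ C := fun h => hxb (subset_closure h)
  have hmeets (hC : C.Nonempty) (j : ι) : (rayParams xb (r j) C).Nonempty := by
    by_contra h
    exact hr.ne_zero j (eq_zero_of_mem_recc hCbdd hC (hN0 j fun l hl hlC => h ⟨l, hl, hlC⟩))
  refine ⟨convexHull_setOf_notMem_eq (convex_Iic 1) fun x hx => ?_,
    convexHull_setOf_notMem_eq (convex_Ici 1) fun x hx => ?_⟩
  · have hne := hmeets ⟨x, hx.2⟩
    exact PBcut_Iic_subset_convexHull (fun j => toReal_lamM_pos hxb (hne j)) hxbC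
      (fun j => add_toReal_lamM_smul_notMem hCopen hxbC (hne j)) hx.1
  · have hne := hmeets ⟨x, hx.2⟩
    exact PBcut_Ici_inter_subset_convexHull (fun j => toReal_lamP_pos hCbdd hxb (hne j)) hCbdd
      hxbC (fun j => add_toReal_lamP_smul_notMem hCopen hCbdd hxbC (hne j)) hx

/-- Proposition 1. If `r^j ∈ recc(C)` for every `j ∈ N₀` and `C` is
bounded, then each of the two inequalities of the disjunction, intersected with `P^B ∖ C`,
has convex hull equal to `P^B` intersected with the corresponding inequality. -/
theorem stmt1 (xb : Fin n → ℝ) (r : ι → Fin n → ℝ) (hr : LinearIndependent ℝ r)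
    (C : Set (Fin n → ℝ)) (hCopen : IsOpen C) (hCconv : Convex ℝ C)
    (hxb : xb ∉ closure C) (hCbdd : Bornology.IsBounded C)
    (hN0 : ∀ j ∈ N0set xb r C, r j ∈ recc C) :
    (convexHull ℝ {x : Fin n → ℝ | ∃ c : ι → ℝ, (∀ j, 0 ≤ c j) ∧
        x = xb + ∑ j, c j • r j ∧ x ∉ C ∧ ∑ j, c j / (lamM xb (r j) C).toReal ≤ 1}
      = {x : Fin n → ℝ | ∃ c : ι → ℝ, (∀ j, 0 ≤ c j) ∧
        x = xb + ∑ j, c j • r j ∧ ∑ j, c j / (lamM xb (r j) C).toReal ≤ 1}) ∧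
    (convexHull ℝ {x : Fin n → ℝ | ∃ c : ι → ℝ, (∀ j, 0 ≤ c j) ∧
        x = xb + ∑ j, c j • r j ∧ x ∉ C ∧ 1 ≤ ∑ j, c j / (lamP xb (r j) C).toReal}
      = {x : Fin n → ℝ | ∃ c : ι → ℝ, (∀ j, 0 ≤ c j) ∧
        x = xb + ∑ j, c j • r j ∧ 1 ≤ ∑ j, c j / (lamP xb (r j) C).toReal}) :=
  stmt1_general xb r hr C hCopen hxb hCbdd hN0
end
end

section
/- Let S ⊆ M. Then every point x = x̄ + Σ_{j∈N} x_j r^j of P^B ∖ G_D^C (with all x_j ≥ 0) satisfies Σ_{j∈S} x_j/λ⁻_j − Σ_{j∈N∖D} x_j/ε_j(S) ≤ 1 (using the convention x/(+∞) := 0). -/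
open Set Pointwise

noncomputable section

variable {n : ℕ} {ι : Type*} [Fintype ι]

/-- `G_D = {x̄} + conv(⋃_{j∈D} {λ r^j : λ > λ⁻_j})`. -/
def GDset (xb : Fin n → ℝ) (r : ι → Fin n → ℝ) (C : Set (Fin n → ℝ)) (D : Finset ι) :
    Set (Fin n → ℝ) :=
  {xb} + convexHull ℝ (⋃ j ∈ (D : Set ι),
    {y : Fin n → ℝ | ∃ l : ℝ, lamM xb (r j) C < (l : EReal) ∧ y = l • r j})

/-- `G_D^C = G_D + recc(C)`. -/
def GDCset (xb : Fin n → ℝ) (r : ι → Fin n → ℝ) (C : Set (Fin n → ℝ)) (D : Finset ι) :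
    Set (Fin n → ℝ) :=
  GDset xb r C D + recc C

/-- `γ_{ij} = sup {γ ≥ 0 : λ⁻_i r^i + γ r^j ∈ recc(G_D^C)}` (`+∞` if unbounded,
`−∞ = sSup ∅` if the set is empty). -/
noncomputable def gam (xb : Fin n → ℝ) (r : ι → Fin n → ℝ) (C : Set (Fin n → ℝ))
    (D : Finset ι) (i j : ι) : EReal :=
  sSup ((fun g : ℝ => (g : EReal)) ''
    {g : ℝ | 0 ≤ g ∧ (lamM xb (r i) C).toReal • r i + g • r j ∈ recc (GDCset xb r C D)})

/-- `M = {i ∈ D : γ_{ij} > 0 for all j ∈ N∖D}`. -/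
def Mset (xb : Fin n → ℝ) (r : ι → Fin n → ℝ) (C : Set (Fin n → ℝ)) (D : Finset ι) :
    Set ι :=
  {i | i ∈ D ∧ ∀ j, j ∉ D → 0 < gam xb r C D i j}

/-- `ε_j(S) = min_{i∈S} γ_{ij}` for `S ≠ ∅`, and `+∞` for `S = ∅` (via `sInf ∅ = ⊤`). -/
noncomputable def eps (xb : Fin n → ℝ) (r : ι → Fin n → ℝ) (C : Set (Fin n → ℝ))
    (D : Finset ι) (S : Finset ι) (j : ι) : EReal :=
  sInf ((fun i => gam xb r C D i j) '' (S : Set ι))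


/-!
If the inequality failed, `T := Σ_{i∈S} x_i/λ⁻_i` would exceed `1 + Σ_{j∉D} x_j/ε_j`, and after
shrinking every `ε_j` to a suitable `g_j < ε_j` still `T > 1 + A` with `A := Σ_{j∉D} x_j/g_j`.
The point `u := T⁻¹ Σ_{i∈S} x_i r^i` is a convex combination of the `λ⁻_i r^i`, so
each `u + g_j r^j` lies in the convex cone `recc(G_D^C)`, as does every `r^j` with `j ∈ D`. Then
`x - x̄ = (T - A) u + Σ_{j∉D} (x_j/g_j) (u + g_j r^j) + Σ_{j∈D∖S} x_j r^j`,
where `(T - A) u = Σ_{i∈S} t_i r^i` with `Σ_{i∈S} t_i/λ⁻_i = T - A > 1` is a convex combination of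
points `λ r^i` with `λ > λ⁻_i`; hence `x ∈ G_D^C`.
-/

section RecessionCone

variable {A B : Set (Fin n → ℝ)} {a d d' v y : Fin n → ℝ}

theorem zero_mem_recc (A : Set (Fin n → ℝ)) : (0 : Fin n → ℝ) ∈ recc A := fun a ha t _ => by
  simpa using ha

theorem add_mem_recc (hd : d ∈ recc A) (hd' : d' ∈ recc A) : d + d' ∈ recc A := by
  intro a ha t ht
  rw [smul_add, ← add_assoc]
  exact hd' _ (hd a ha t ht) t ht

theorem smul_mem_recc (hd : d ∈ recc A) {s : ℝ} (hs : 0 ≤ s) : s • d ∈ recc A := by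
  intro a ha t ht
  rw [smul_smul]
  exact hd a ha _ (mul_nonneg ht hs)

theorem sum_smul_mem_recc {κ : Type*} {s : Finset κ} {w : κ → ℝ} {v : κ → Fin n → ℝ}
    (hw : ∀ i ∈ s, 0 ≤ w i) (hv : ∀ i ∈ s, v i ∈ recc A) : ∑ i ∈ s, w i • v i ∈ recc A :=
  Finset.sum_induction _ (· ∈ recc A) (fun _ _ => add_mem_recc) (zero_mem_recc A)
    fun i hi => smul_mem_recc (hv i hi) (hw i hi)

theorem sum_smul_add_mem_recc {κ : Type*} {s : Finset κ} {w : κ → ℝ} {v : κ → Fin n → ℝ}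
    (hw : ∀ i ∈ s, 0 ≤ w i) (hw₁ : ∑ i ∈ s, w i = 1) (hv : ∀ i ∈ s, v i + y ∈ recc A) :
    ∑ i ∈ s, w i • v i + y ∈ recc A := by
  have h := sum_smul_mem_recc hw hv
  rwa [Finset.sum_congr rfl fun i _ => smul_add (w i) (v i) y, Finset.sum_add_distrib,
    ← Finset.sum_smul, hw₁, one_smul] at h

theorem add_smul_mem_recc_of_le (hv : v ∈ recc A) {g g' : ℝ} (hv' : v + g' • d ∈ recc A)
    (hg : 0 ≤ g) (hgg' : g ≤ g') : v + g • d ∈ recc A := by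
  have hθ : g / g' * g' = g :=
    div_mul_cancel_of_imp fun h => le_antisymm (h ▸ hgg') hg
  -- `v + g • d = (1 - g / g') • v + (g / g') • (v + g' • d)`
  have h := add_mem_recc (smul_mem_recc hv (sub_nonneg.2 (div_le_one_of_le₀ hgg' (hg.trans hgg'))))
    (smul_mem_recc hv' (div_nonneg hg (hg.trans hgg')))
  rwa [smul_add, ← add_assoc, ← add_smul, sub_add_cancel, one_smul, smul_smul, hθ] at h

theorem add_mem_of_mem_recc (ha : a ∈ A) (hd : d ∈ recc A) : a + d ∈ A := by
  simpa using hd a ha 1 zero_le_one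

theorem recc_subset_recc_add_left : recc A ⊆ recc (A + B) := by
  rintro d hd _ ⟨a, ha, b, hb, rfl⟩ t ht
  rw [add_right_comm]
  exact add_mem_add (hd a ha t ht) hb

theorem recc_subset_recc_add_right : recc B ⊆ recc (A + B) := by
  rw [add_comm]
  exact recc_subset_recc_add_left

end RecessionCone

section RayHull

variable {E ι : Type*} [AddCommGroup E] [Module ℝ E] {Λ : ι → ℝ} {r : ι → E} {D : Finset ι}

def rayHull (Λ : ι → ℝ) (r : ι → E) (D : Finset ι) : Set E :=
  convexHull ℝ (⋃ j ∈ D, (fun l : ℝ => l • r j) '' Ioi (Λ j))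

theorem rayHull_mono {S : Finset ι} (h : S ⊆ D) : rayHull Λ r S ⊆ rayHull Λ r D :=
  convexHull_mono (biUnion_subset_biUnion_left (Finset.coe_subset.2 h))

theorem sum_smul_mem_rayHull (hΛ : ∀ j ∈ D, 0 < Λ j) {t : ι → ℝ} (ht : ∀ j ∈ D, 0 ≤ t j)
    (h : 1 < ∑ j ∈ D, t j / Λ j) : ∑ j ∈ D, t j • r j ∈ rayHull Λ r D := by
  set σ := ∑ j ∈ D, t j / Λ j
  have hσ : 0 < σ := one_pos.trans h
  have hsplit : ∀ j ∈ D, t j • r j = (t j / Λ j / σ) • ((σ * Λ j) • r j) := fun j hj => by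
    rw [smul_smul]
    congr 1
    field_simp [(hΛ j hj).ne']
  rw [Finset.sum_congr rfl hsplit]
  refine (convex_convexHull ℝ _).sum_mem
    (fun j hj => div_nonneg (div_nonneg (ht j hj) (hΛ j hj).le) hσ.le)
    (by rw [← Finset.sum_div, div_self hσ.ne']) fun j hj => subset_convexHull ℝ _ ?_
  exact mem_biUnion hj ⟨σ * Λ j, lt_mul_of_one_lt_left (hΛ j hj) h, rfl⟩

theorem add_smul_mem_rayHull (hΛ : ∀ j ∈ D, 0 < Λ j) {p : E} (hp : p ∈ rayHull Λ r D)
    {i : ι} (hi : i ∈ D) {s : ℝ} (hs : 0 ≤ s) : p + s • r i ∈ rayHull Λ r D := by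
  classical
  suffices h : rayHull Λ r D ⊆ ⋂ s ∈ Ici (0 : ℝ), (· + s • r i) ⁻¹' rayHull Λ r D from
    mem_iInter₂.1 (h hp) s hs
  refine convexHull_min ?_
    (convex_iInter₂ fun s _ => (convex_convexHull ℝ _).translate_preimage_left _)
  rintro _ hu
  obtain ⟨j, hj, l, hl, rfl⟩ := mem_iUnion₂.1 hu
  refine mem_iInter₂.2 fun t (ht : 0 ≤ t) => ?_
  have hl₀ : 0 < l := (hΛ j hj).trans hl
  have hmem := sum_smul_mem_rayHull (r := r) hΛ (t := Pi.single j l + Pi.single i t)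
    (fun k _ => by simp only [Pi.add_apply, Pi.single_apply]; split_ifs <;> linarith) ?_
  · simpa [add_smul, Finset.sum_add_distrib, Pi.single_apply, ite_smul, hj, hi] using hmem
  · have : 1 < l / Λ j := (one_lt_div (hΛ j hj)).2 hl
    have : 0 ≤ t / Λ i := div_nonneg ht (hΛ i hi).le
    simp only [Pi.add_apply, Pi.single_apply, add_div, ite_div, zero_div, Finset.sum_add_distrib,
      Finset.sum_ite_eq', hj, hi, if_true]
    linarith

end RayHull

section Approximation

open Filter Topology

theorem exists_pos_coe_lt_and_div_lt {e : EReal} (he : 0 < e) (c : ℝ) {β : ℝ}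
    (hβ : c / e.toReal < β) : ∃ g : ℝ, 0 < g ∧ (g : EReal) < e ∧ c / g < β := by
  induction e using EReal.rec with
  | bot => exact absurd he (by simp)
  | coe x =>
    have hx : 0 < x := EReal.coe_pos.1 he
    have hlim : Tendsto (fun g => c / g) (𝓝[<] x) (𝓝 (c / x)) :=
      ((continuousAt_const.div continuousAt_id hx.ne').tendsto).mono_left nhdsWithin_le_nhds
    obtain ⟨g, ⟨hg₀, hgx⟩, hgβ⟩ :=
      (eventually_of_mem (Ioo_mem_nhdsLT hx) fun g hg => hg).and
        (hlim.eventually (gt_mem_nhds hβ)) |>.exists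
    exact ⟨g, hg₀, EReal.coe_lt_coe_iff.2 hgx, hgβ⟩
  | top =>
    have hlim : Tendsto (fun g : ℝ => c / g) atTop (𝓝 0) :=
      tendsto_const_nhds.div_atTop tendsto_id
    obtain ⟨g, hg₀, hgβ⟩ := ((eventually_gt_atTop 0).and
      (hlim.eventually (gt_mem_nhds (by simpa using hβ)))).exists
    exact ⟨g, hg₀, EReal.coe_lt_top g, hgβ⟩

theorem exists_sum_div_lt {ι : Type*} {s : Finset ι} {e : ι → EReal} (he : ∀ j ∈ s, 0 < e j)
    (c : ι → ℝ) {b : ℝ} (hb : ∑ j ∈ s, c j / (e j).toReal < b) :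
    ∃ g : ι → ℝ, (∀ j ∈ s, 0 < g j ∧ (g j : EReal) < e j) ∧ ∑ j ∈ s, c j / g j < b := by
  set δ := (b - ∑ j ∈ s, c j / (e j).toReal) / (s.card + 1)
  have hδ : 0 < δ := div_pos (sub_pos.2 hb) (by positivity)
  have hδb : (s.card + 1) * δ = b - ∑ j ∈ s, c j / (e j).toReal :=
    mul_div_cancel₀ _ (by positivity)
  choose! g hg using fun j (hj : j ∈ s) =>
    exists_pos_coe_lt_and_div_lt (he j hj) (c j) (lt_add_of_pos_right (c j / (e j).toReal) hδ)
  refine ⟨g, fun j hj => ⟨(hg j hj).1, (hg j hj).2.1⟩, ?_⟩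
  calc ∑ j ∈ s, c j / g j ≤ ∑ j ∈ s, (c j / (e j).toReal + δ) :=
        Finset.sum_le_sum fun j hj => (hg j hj).2.2.le
    _ = ∑ j ∈ s, c j / (e j).toReal + s.card * δ := by
        rw [Finset.sum_add_distrib, Finset.sum_const, nsmul_eq_mul]
    _ < b := by linarith

end Approximation

section GD

variable {ι : Type*} {xb : Fin n → ℝ} {r : ι → Fin n → ℝ} {C : Set (Fin n → ℝ)}
  {D : Finset ι}

theorem toReal_lamM_pos_s6 (hlam : ∀ j ∈ D, 0 < lamM xb (r j) C ∧ lamM xb (r j) C < ⊤) {j : ι}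
    (hj : j ∈ D) : 0 < (lamM xb (r j) C).toReal :=
  EReal.toReal_pos (hlam j hj).1 (hlam j hj).2.ne

theorem GDset_eq_add_rayHull (hlam : ∀ j ∈ D, 0 < lamM xb (r j) C ∧ lamM xb (r j) C < ⊤) :
    GDset xb r C D = {xb} + rayHull (fun j => (lamM xb (r j) C).toReal) r D := by
  unfold GDset rayHull
  congr 2
  refine iUnion₂_congr fun j hj => ?_
  have hlt : ∀ l : ℝ, lamM xb (r j) C < l ↔ (lamM xb (r j) C).toReal < l := fun l => by
    rw [← EReal.coe_lt_coe_iff, EReal.coe_toReal (hlam j hj).2.ne (hlam j hj).1.ne_bot]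
  ext y
  simp [hlt, eq_comm]

theorem mem_recc_GDCset (hlam : ∀ j ∈ D, 0 < lamM xb (r j) C ∧ lamM xb (r j) C < ⊤) {i : ι}
    (hi : i ∈ D) : r i ∈ recc (GDCset xb r C D) := by
  refine recc_subset_recc_add_left ?_
  rw [GDset_eq_add_rayHull hlam]
  exact recc_subset_recc_add_right fun p hp t ht =>
    add_smul_mem_rayHull (fun j hj => toReal_lamM_pos_s6 hlam hj) hp hi ht

theorem smul_add_smul_mem_recc_GDCset_of_lt_gam
    (hlam : ∀ j ∈ D, 0 < lamM xb (r j) C ∧ lamM xb (r j) C < ⊤) {i j : ι} (hi : i ∈ D) {g : ℝ}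
    (hg : 0 ≤ g) (hgam : (g : EReal) < gam xb r C D i j) :
    (lamM xb (r i) C).toReal • r i + g • r j ∈ recc (GDCset xb r C D) := by
  obtain ⟨_, ⟨g', ⟨-, hg'⟩, rfl⟩, hgg'⟩ := lt_sSup_iff.1 hgam
  exact add_smul_mem_recc_of_le
    (smul_mem_recc (mem_recc_GDCset hlam hi) (toReal_lamM_pos_s6 hlam hi).le) hg' hg
    (EReal.coe_le_coe_iff.1 hgg'.le)

theorem add_sum_smul_mem_GDCset [Fintype ι] [DecidableEq ι]
    (hlam : ∀ j ∈ D, 0 < lamM xb (r j) C ∧ lamM xb (r j) C < ⊤) {S : Finset ι} (hSD : S ⊆ D)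
    {c g : ι → ℝ} (hc : ∀ j, 0 ≤ c j) (hg : ∀ j ∈ Dᶜ, 0 < g j)
    (hray : ∀ i ∈ S, ∀ j ∈ Dᶜ,
      (lamM xb (r i) C).toReal • r i + g j • r j ∈ recc (GDCset xb r C D))
    (hsum : 1 + ∑ j ∈ Dᶜ, c j / g j < ∑ i ∈ S, c i / (lamM xb (r i) C).toReal) :
    xb + ∑ j, c j • r j ∈ GDCset xb r C D := by
  set Λ := fun j => (lamM xb (r j) C).toReal
  have hΛ : ∀ j ∈ D, 0 < Λ j := fun j hj => toReal_lamM_pos_s6 hlam hj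
  set T := ∑ i ∈ S, c i / Λ i
  set A := ∑ j ∈ Dᶜ, c j / g j
  have hA : 0 ≤ A :=
    Finset.sum_nonneg fun j hj => div_nonneg (hc j) (hg j hj).le
  have hT : 0 < T := by linarith
  set w := fun i => c i / Λ i / T
  have hw : ∀ i ∈ S, 0 ≤ w i := fun i hi => div_nonneg (div_nonneg (hc i) (hΛ i (hSD hi)).le) hT.le
  have hw₁ : ∑ i ∈ S, w i = 1 := by rw [← Finset.sum_div, div_self hT.ne']
  set u := ∑ i ∈ S, w i • (Λ i • r i)
  have hsmul_u : ∀ a : ℝ, a • u = ∑ i ∈ S, (a / T * c i) • r i := fun a => by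
    rw [Finset.smul_sum]
    refine Finset.sum_congr rfl fun i hi => ?_
    rw [smul_smul, smul_smul]
    congr 1
    simp only [w]
    field_simp [(hΛ i (hSD hi)).ne']
  have hK : (T - A) • u ∈ rayHull Λ r D := by
    rw [hsmul_u]
    refine rayHull_mono hSD (sum_smul_mem_rayHull (fun i hi => hΛ i (hSD hi))
      (fun i _ => mul_nonneg (div_nonneg (by linarith) hT.le) (hc i)) ?_)
    simp_rw [mul_div_assoc]
    rw [← Finset.mul_sum, div_mul_cancel₀ _ hT.ne']
    linarith
  have hR : ∀ j ∈ Dᶜ, u + g j • r j ∈ recc (GDCset xb r C D) := fun j hj =>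
    sum_smul_add_mem_recc hw hw₁ fun i hi => hray i hi j hj
  have hdecomp : ∑ j, c j • r j = (T - A) • u +
      (∑ j ∈ Dᶜ, (c j / g j) • (u + g j • r j) + ∑ j ∈ D \ S, c j • r j) := by
    have hcompl : ∑ j ∈ Dᶜ, (c j / g j) • (u + g j • r j) = A • u + ∑ j ∈ Dᶜ, c j • r j := by
      simp_rw [smul_add, smul_smul]
      rw [Finset.sum_add_distrib, ← Finset.sum_smul]
      refine congrArg _ (Finset.sum_congr rfl fun j hj => ?_)
      rw [div_mul_cancel₀ _ (hg j hj).ne']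
    have hTu : T • u = ∑ i ∈ S, c i • r i := by
      rw [hsmul_u]
      simp_rw [div_self hT.ne', one_mul]
    rw [hcompl, ← Finset.sum_add_sum_compl D, ← Finset.sum_sdiff hSD, ← hTu]
    module
  rw [hdecomp, ← add_assoc]
  refine add_mem_of_mem_recc ?_ (add_mem_recc
    (sum_smul_mem_recc (fun j hj => div_nonneg (hc j) (hg j hj).le) hR)
    (sum_smul_mem_recc (fun j _ => hc j) fun j hj =>
      mem_recc_GDCset hlam (Finset.mem_sdiff.1 hj).1))
  rw [GDCset, GDset_eq_add_rayHull hlam, ← add_zero (xb + _)]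
  exact add_mem_add (add_mem_add rfl hK) (zero_mem_recc C)

end GD

theorem stmt6_general [DecidableEq ι] (xb : Fin n → ℝ) (r : ι → Fin n → ℝ)
    (C : Set (Fin n → ℝ))
    (D : Finset ι) (hD : (D : Set ι) ⊆ N1set xb r C ∪ N2set xb r C)
    (S : Finset ι) (hS : (S : Set ι) ⊆ Mset xb r C D)
    (c : ι → ℝ) (hc : ∀ j, 0 ≤ c j)
    (hx : xb + ∑ j, c j • r j ∉ GDCset xb r C D) :
    ∑ j ∈ S, c j / (lamM xb (r j) C).toReal
      - ∑ j ∈ Dᶜ, c j / (eps xb r C D S j).toReal ≤ 1 := by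
  have hlam : ∀ j ∈ D, 0 < lamM xb (r j) C ∧ lamM xb (r j) C < ⊤ := fun j hj =>
    (hD hj).elim (fun h => ⟨h.1, h.2.1⟩) fun h => ⟨h.1, h.2.1⟩
  have hSD : S ⊆ D := fun i hi => (hS hi).1
  have heps : ∀ j ∈ Dᶜ, 0 < eps xb r C D S j := fun j hj => by
    simp only [eps, sInf_image, Finset.mem_coe, ← Finset.inf_eq_iInf]
    exact (Finset.lt_inf_iff EReal.zero_lt_top).2 fun i hi => (hS hi).2 j (Finset.mem_compl.1 hj)
  by_contra! hcon
  obtain ⟨g, hg, hgsum⟩ := exists_sum_div_lt heps c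
    (b := ∑ i ∈ S, c i / (lamM xb (r i) C).toReal - 1) (by linarith)
  refine hx (add_sum_smul_mem_GDCset hlam hSD hc (fun j hj => (hg j hj).1)
    (fun i hi j hj => ?_) (by linarith))
  exact smul_add_smul_mem_recc_GDCset_of_lt_gam hlam (hSD hi) (hg j hj).1.le
    ((hg j hj).2.trans_le (sInf_le (mem_image_of_mem _ hi)))

/-- Theorem 3. For `S ⊆ M`, every point `x = x̄ + Σ_j x_j r^j` of
`P^B ∖ G_D^C` satisfies `Σ_{j∈S} x_j/λ⁻_j − Σ_{j∈N∖D} x_j/ε_j(S) ≤ 1`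
(convention `x/(+∞) := 0`, realized via `EReal.toReal ⊤ = 0` and `x/0 = 0`). -/
theorem stmt6 [DecidableEq ι] (xb : Fin n → ℝ) (r : ι → Fin n → ℝ)
    (hr : LinearIndependent ℝ r)
    (C : Set (Fin n → ℝ)) (hCopen : IsOpen C) (hCconv : Convex ℝ C)
    (hxb : xb ∉ closure C) (hrecc : recc C ⊆ reccPBset r)
    (D : Finset ι) (hD : (D : Set ι) ⊆ N1set xb r C ∪ N2set xb r C)
    (S : Finset ι) (hS : (S : Set ι) ⊆ Mset xb r C D)
    (c : ι → ℝ) (hc : ∀ j, 0 ≤ c j)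
    (hx : xb + ∑ j, c j • r j ∉ GDCset xb r C D) :
    ∑ j ∈ S, c j / (lamM xb (r j) C).toReal
      - ∑ j ∈ Dᶜ, c j / (eps xb r C D S j).toReal ≤ 1 :=
  stmt6_general xb r C D hD S hS c hc hx
end
end

section
/- Let x̂ ∈ ℝ^N with x̂_j ≥ 0 for all j ∈ N. Then the set function F : 2^M → ℝ defined by F(S) := Σ_{j∈S} x̂_j/λ⁻_j − Σ_{j∈N∖D} x̂_j/ε_j(S) (with x̂_j/(+∞) := 0) is supermodular, i.e., F(S ∪ T) + F(S ∩ T) ≥ F(S) + F(T) for all S, T ⊆ M. -/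
open Set Pointwise

noncomputable section

variable {n : ℕ} {ι : Type*} [Fintype ι]

/-- The cut-violation set function
`F(S) = Σ_{j∈S} x̂_j/λ⁻_j − Σ_{j∈N∖D} x̂_j/ε_j(S)`. -/
noncomputable def Ffun [DecidableEq ι] (xb : Fin n → ℝ) (r : ι → Fin n → ℝ)
    (C : Set (Fin n → ℝ)) (D : Finset ι) (xhat : ι → ℝ) (S : Finset ι) : ℝ :=
  ∑ j ∈ S, xhat j / (lamM xb (r j) C).toReal
    - ∑ j ∈ Dᶜ, xhat j / (eps xb r C D S j).toReal

/-! The first sum of `F` is modular, so only the second one matters. For `j ∉ D` we have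
`ε_j(S ∪ T) = min (ε_j(S), ε_j(T))` and `ε_j(S ∩ T) ≥ max (ε_j(S), ε_j(T))`, and all these values
lie in `(0, +∞]` because every `γ_{ij}` with `i ∈ M` is positive. Since `e ↦ x̂_j / e` is antitone
on `(0, +∞]`, the subtracted sum is submodular, which makes `F` supermodular. -/

theorem AntitoneOn.map_min_add_le {α β : Type*} [LinearOrder α] [AddCommMonoid β] [PartialOrder β]
    [IsOrderedAddMonoid β] {φ : α → β} {s : Set α} (hφ : AntitoneOn φ s) {a b c : α}
    (ha : a ∈ s) (hb : b ∈ s) (hc : c ∈ s) (hac : a ≤ c) (hbc : b ≤ c) :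
    φ (min a b) + φ c ≤ φ a + φ b := by
  rcases le_total a b with hab | hba
  · rw [min_eq_left hab]
    exact add_le_add le_rfl (hφ hb hc hbc)
  · rw [min_eq_right hba, add_comm (φ a)]
    exact add_le_add le_rfl (hφ ha hc hac)

-- At `e = ⊤` the value is `a / 0 = 0`, which is the convention `x̂_j / (+∞) = 0`.
theorem EReal.antitoneOn_div_toReal {a : ℝ} (ha : 0 ≤ a) :
    AntitoneOn (fun e : EReal => a / e.toReal) (Ioi 0) := by
  intro e₁ he₁ e₂ _ h₁₂
  by_cases he₂ : e₂ = ⊤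
  · simpa [he₂] using _root_.div_nonneg ha (toReal_nonneg he₁.le)
  · exact div_le_div_of_nonneg_left ha (toReal_pos he₁ (ne_top_of_le_ne_top he₂ h₁₂))
      (toReal_le_toReal h₁₂ (ne_bot_of_gt he₁) he₂)

section eps

omit [Fintype ι]

variable {xb : Fin n → ℝ} {r : ι → Fin n → ℝ} {C : Set (Fin n → ℝ)} {D : Finset ι}

theorem eps_eq_inf (S : Finset ι) (j : ι) :
    eps xb r C D S j = S.inf fun i => gam xb r C D i j :=
  (Finset.inf_eq_sInf_image _ _).symm

theorem eps_union [DecidableEq ι] (S T : Finset ι) (j : ι) :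
    eps xb r C D (S ∪ T) j = min (eps xb r C D S j) (eps xb r C D T j) := by
  simp only [eps_eq_inf, Finset.inf_union]

theorem eps_anti {S T : Finset ι} (hST : S ⊆ T) (j : ι) :
    eps xb r C D T j ≤ eps xb r C D S j := by
  simpa only [eps_eq_inf] using Finset.inf_mono hST

theorem eps_pos {S : Finset ι} (hS : (S : Set ι) ⊆ Mset xb r C D) {j : ι} (hj : j ∉ D) :
    0 < eps xb r C D S j := by
  rw [eps_eq_inf, Finset.lt_inf_iff EReal.zero_lt_top]
  exact fun i hi => (hS hi).2 j hj

theorem div_eps_union_add_div_eps_inter_le [DecidableEq ι] {a : ℝ} (ha : 0 ≤ a)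
    {S T : Finset ι} (hS : (S : Set ι) ⊆ Mset xb r C D) (hT : (T : Set ι) ⊆ Mset xb r C D)
    {j : ι} (hj : j ∉ D) :
    a / (eps xb r C D (S ∪ T) j).toReal + a / (eps xb r C D (S ∩ T) j).toReal ≤
      a / (eps xb r C D S j).toReal + a / (eps xb r C D T j).toReal := by
  have hSj := eps_pos hS hj
  have hS_le : eps xb r C D S j ≤ eps xb r C D (S ∩ T) j :=
    eps_anti Finset.inter_subset_left j
  rw [eps_union]
  exact (EReal.antitoneOn_div_toReal ha).map_min_add_le hSj (eps_pos hT hj)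
    (hSj.trans_le hS_le) hS_le (eps_anti Finset.inter_subset_right j)

end eps

theorem stmt7_general [DecidableEq ι] (xb : Fin n → ℝ) (r : ι → Fin n → ℝ)
    (C : Set (Fin n → ℝ)) (D : Finset ι) (xhat : ι → ℝ) (hxhat : ∀ j, 0 ≤ xhat j)
    (S T : Finset ι) (hS : (S : Set ι) ⊆ Mset xb r C D) (hT : (T : Set ι) ⊆ Mset xb r C D) :
    Ffun xb r C D xhat S + Ffun xb r C D xhat T ≤
      Ffun xb r C D xhat (S ∪ T) + Ffun xb r C D xhat (S ∩ T) := by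
  have hcut : ∑ j ∈ Dᶜ, (xhat j / (eps xb r C D (S ∪ T) j).toReal
        + xhat j / (eps xb r C D (S ∩ T) j).toReal)
      ≤ ∑ j ∈ Dᶜ, (xhat j / (eps xb r C D S j).toReal
        + xhat j / (eps xb r C D T j).toReal) :=
    Finset.sum_le_sum fun j hj =>
      div_eps_union_add_div_eps_inter_le (hxhat j) hS hT (Finset.mem_compl.mp hj)
  rw [Finset.sum_add_distrib, Finset.sum_add_distrib] at hcut
  have hmodular := Finset.sum_union_inter (s₁ := S) (s₂ := T)
    (f := fun j => xhat j / (lamM xb (r j) C).toReal)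
  simp only [Ffun]
  linarith

/-- Proposition 4. For nonnegative `x̂`, the set function `F` is
supermodular on subsets of `M`: `F(S ∪ T) + F(S ∩ T) ≥ F(S) + F(T)`. -/
theorem stmt7 [DecidableEq ι] (xb : Fin n → ℝ) (r : ι → Fin n → ℝ)
    (hr : LinearIndependent ℝ r)
    (C : Set (Fin n → ℝ)) (hCopen : IsOpen C) (hCconv : Convex ℝ C)
    (hxb : xb ∉ closure C) (hrecc : recc C ⊆ reccPBset r)
    (D : Finset ι) (hD : (D : Set ι) ⊆ N1set xb r C ∪ N2set xb r C)
    (xhat : ι → ℝ) (hxhat : ∀ j, 0 ≤ xhat j)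
    (S T : Finset ι) (hS : (S : Set ι) ⊆ Mset xb r C D) (hT : (T : Set ι) ⊆ Mset xb r C D) :
    Ffun xb r C D xhat S + Ffun xb r C D xhat T ≤
      Ffun xb r C D xhat (S ∪ T) + Ffun xb r C D xhat (S ∩ T) :=
  stmt7_general xb r C D xhat hxhat S T hS hT
end
end

section
/- For every k ∈ N₂ it holds that S_k^C = {x̄} + conv(⋃_{j∈N₁∪N₂} {λ r^j : λ⁻_j < λ < λ⁺_j}) + {λ r^k : λ ≤ 0} + recc(C). -/
open Set Pointwise

noncomputable section

variable {n : ℕ} {ι : Type*} [Fintype ι]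

/-- `S_k^C = {x̄} + conv(⋃_{j∈N₂} {λ r^j : 0 ≤ λ < λ⁺_j}) + {λ r^k : λ ≤ 0} + recc(C)`. -/
def SkCset (xb : Fin n → ℝ) (r : ι → Fin n → ℝ) (C : Set (Fin n → ℝ)) (k : ι) :
    Set (Fin n → ℝ) :=
  {xb} + convexHull ℝ (⋃ j ∈ N2set xb r C,
      {y : Fin n → ℝ | ∃ l : ℝ, 0 ≤ l ∧ (l : EReal) < lamP xb (r j) C ∧ y = l • r j})
    + {y : Fin n → ℝ | ∃ l : ℝ, l ≤ 0 ∧ y = l • r k}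
    + recc C

/-! ### Auxiliary lemmas -/

lemma recc_zero' (C : Set (Fin n → ℝ)) : (0 : Fin n → ℝ) ∈ recc C := by
  intro a ha t ht
  simpa using ha

lemma recc_add' {C : Set (Fin n → ℝ)} {d e : Fin n → ℝ}
    (hd : d ∈ recc C) (he : e ∈ recc C) : d + e ∈ recc C := by
  intro a ha t ht
  have h := he (a + t • d) (hd a ha t ht) t ht
  have h2 : a + t • (d + e) = a + t • d + t • e := by
    rw [smul_add, add_assoc]
  rw [h2]; exact h

lemma recc_smul' {C : Set (Fin n → ℝ)} {d : Fin n → ℝ}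
    (hd : d ∈ recc C) {c : ℝ} (hc : 0 ≤ c) : c • d ∈ recc C := by
  intro a ha t ht
  have h := hd a ha (t * c) (mul_nonneg ht hc)
  rw [smul_smul]; exact h

lemma recc_convex' (C : Set (Fin n → ℝ)) : Convex ℝ (recc C) := by
  intro d hd e he a b ha hb hab
  exact recc_add' (recc_smul' hd ha) (recc_smul' he hb)

lemma lamP_eq_top_ray {xb d : Fin n → ℝ} {C : Set (Fin n → ℝ)}
    (h : lamP xb d C = ⊤) (M : ℝ) : ∃ l : ℝ, M < l ∧ 0 ≤ l ∧ xb + l • d ∈ C := by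
  by_contra hcon
  push_neg at hcon
  have hle : lamP xb d C ≤ ((max M 0 : ℝ) : EReal) := by
    apply sSup_le
    rintro z ⟨l, ⟨hl0, hlC⟩, rfl⟩
    have hlM : l ≤ M := by
      by_contra hgt
      push_neg at hgt
      exact (hcon l hgt hl0) hlC
    exact EReal.coe_le_coe_iff.mpr (le_trans hlM (le_max_left M 0))
  rw [h] at hle
  exact (EReal.coe_lt_top _).not_ge hle

/-- If the halfline from `xb` in direction `d` eventually stays in the open convex set `C`
(unboundedly), then `d` is a recession direction of `C`. -/
lemma ray_mem_recc {C : Set (Fin n → ℝ)} (hCopen : IsOpen C) (hCconv : Convex ℝ C)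
    {xb d : Fin n → ℝ} (h : lamP xb d C = ⊤) : d ∈ recc C := by
  intro a ha t ht
  rcases eq_or_lt_of_le ht with rfl | htpos
  · simpa using ha
  · obtain ⟨ε, hε, hball⟩ := Metric.isOpen_iff.mp hCopen a ha
    obtain ⟨s, hsM, hs0, hsC⟩ := lamP_eq_top_ray h (max t (t + t * ‖a - xb‖ / ε))
    have hts : t < s := lt_of_le_of_lt (le_max_left _ _) hsM
    have hs : 0 < s := lt_trans htpos hts
    have hs' : s ≠ 0 := ne_of_gt hs
    have hstpos : 0 < s - t := by linarith
    have hst0 : s - t ≠ 0 := ne_of_gt hstpos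
    have hθ0 : 0 < t / s := div_pos htpos hs
    have hθ1 : t / s < 1 := (div_lt_one hs).mpr hts
    have h1θ : 0 < 1 - t / s := by linarith
    set b : Fin n → ℝ := a + (t / (s - t)) • (a - xb) with hbdef
    have key : b - a = (t / (s - t)) • (a - xb) := by
      rw [hbdef]; abel
    have hnorm : ‖b - a‖ = t / (s - t) * ‖a - xb‖ := by
      rw [key, norm_smul, Real.norm_eq_abs,
        abs_of_nonneg (div_nonneg htpos.le hstpos.le)]
    have hst : t + t * ‖a - xb‖ / ε < s := lt_of_le_of_lt (le_max_right _ _) hsM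
    have hb_dist : b ∈ Metric.ball a ε := by
      rw [mem_ball_iff_norm, hnorm, div_mul_eq_mul_div, div_lt_iff₀ hstpos]
      have h1 : t * ‖a - xb‖ / ε < s - t := by linarith
      have h2 : t * ‖a - xb‖ < (s - t) * ε := (div_lt_iff₀ hε).mp h1
      linarith [h2, mul_comm (s - t) ε]
    have hbC : b ∈ C := hball hb_dist
    have hcomb := hCconv hbC hsC h1θ.le hθ0.le (by ring)
    have heq : (1 - t / s) • b + (t / s) • (xb + s • d) = a + t • d := by
      rw [hbdef]
      match_scalars <;> field_simp <;> ring
    rw [← heq]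
    exact hcomb

lemma mem_add4 {A B K R : Set (Fin n → ℝ)} {x : Fin n → ℝ} :
    x ∈ A + B + K + R ↔ ∃ a ∈ A, ∃ b ∈ B, ∃ y ∈ K, ∃ d ∈ R, x = a + b + y + d := by
  simp only [Set.mem_add]
  constructor
  · rintro ⟨_, ⟨_, ⟨a, ha, b, hb, rfl⟩, y, hy, rfl⟩, d, hd, rfl⟩
    exact ⟨a, ha, b, hb, y, hy, d, hd, rfl⟩
  · rintro ⟨a, ha, b, hb, y, hy, d, hd, rfl⟩
    exact ⟨_, ⟨_, ⟨a, ha, b, hb, rfl⟩, y, hy, rfl⟩, d, hd, rfl⟩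

lemma assemble {xb : Fin n → ℝ} {UL UR K R : Set (Fin n → ℝ)}
    (hK : ∀ y₁ ∈ K, ∀ y₂ ∈ K, y₁ + y₂ ∈ K)
    (hR : ∀ d₁ ∈ R, ∀ d₂ ∈ R, d₁ + d₂ ∈ R)
    (hLR : convexHull ℝ UL ⊆ convexHull ℝ UR + K)
    (hRL : convexHull ℝ UR ⊆ convexHull ℝ UL + R) :
    {xb} + convexHull ℝ UL + K + R = {xb} + convexHull ℝ UR + K + R := by
  apply Set.Subset.antisymm
  · intro x hx
    rw [mem_add4] at hx ⊢
    obtain ⟨a, ha, c, hc, y, hy, d, hd, rfl⟩ := hx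
    obtain ⟨c', hc', y', hy', hcy⟩ := Set.mem_add.mp (hLR hc)
    exact ⟨a, ha, c', hc', y' + y, hK _ hy' _ hy, d, hd, by rw [← hcy]; abel⟩
  · intro x hx
    rw [mem_add4] at hx ⊢
    obtain ⟨a, ha, c, hc, y, hy, d, hd, rfl⟩ := hx
    obtain ⟨c', hc', d', hd', hcd⟩ := Set.mem_add.mp (hRL hc)
    exact ⟨a, ha, c', hc', y, hy, d' + d, hR _ hd' _ hd, by rw [← hcd]; abel⟩

/-- Proposition 6. For `k ∈ N₂`,
`S_k^C = {x̄} + conv(⋃_{j∈N₁∪N₂} {λ r^j : λ⁻_j < λ < λ⁺_j}) + {λ r^k : λ ≤ 0} + recc(C)`. -/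
theorem stmt11 (xb : Fin n → ℝ) (r : ι → Fin n → ℝ) (hr : LinearIndependent ℝ r)
    (C : Set (Fin n → ℝ)) (hCopen : IsOpen C) (hCconv : Convex ℝ C)
    (hxb : xb ∉ closure C) (hrecc : recc C ⊆ reccPBset r)
    (k : ι) (hk : k ∈ N2set xb r C) :
    SkCset xb r C k
      = {xb} + convexHull ℝ (⋃ j ∈ N1set xb r C ∪ N2set xb r C,
          {y : Fin n → ℝ | ∃ l : ℝ, lamM xb (r j) C < (l : EReal) ∧
            (l : EReal) < lamP xb (r j) C ∧ y = l • r j})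
        + {y : Fin n → ℝ | ∃ l : ℝ, l ≤ 0 ∧ y = l • r k}
        + recc C := by
  obtain ⟨hk1, hk2, hk3, hk4⟩ := hk
  -- real endpoints for k
  set ak : ℝ := (lamM xb (r k) C).toReal with hak
  set bk : ℝ := (lamP xb (r k) C).toReal with hbk
  have hkMne : lamM xb (r k) C ≠ ⊥ := ne_of_gt (lt_of_le_of_lt bot_le hk1)
  have hkPne : lamP xb (r k) C ≠ ⊥ := ne_of_gt (lt_of_le_of_lt bot_le (lt_trans hk1 hk3))
  have hakeq : ((ak : ℝ) : EReal) = lamM xb (r k) C := EReal.coe_toReal (ne_of_lt hk2) hkMne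
  have hbkeq : ((bk : ℝ) : EReal) = lamP xb (r k) C := EReal.coe_toReal (ne_of_lt hk4) hkPne
  have hak0 : 0 < ak := by
    have := hk1; rw [← hakeq] at this; exact_mod_cast this
  have hakbk : ak < bk := by
    have := hk3; rw [← hakeq, ← hbkeq] at this; exact_mod_cast this
  -- `0` belongs to the left generating set
  have h0UL : (0 : Fin n → ℝ) ∈ ⋃ j ∈ N2set xb r C,
      {y : Fin n → ℝ | ∃ l : ℝ, 0 ≤ l ∧ (l : EReal) < lamP xb (r j) C ∧ y = l • r j} := by
    refine Set.mem_iUnion₂.mpr ⟨k, ⟨hk1, hk2, hk3, hk4⟩, ⟨0, le_refl 0, ?_, ?_⟩⟩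
    · rw [← hbkeq]; exact_mod_cast lt_trans hak0 hakbk
    · rw [zero_smul]
  unfold SkCset
  apply assemble
  · -- K + K ⊆ K
    rintro y₁ ⟨l₁, hl₁, rfl⟩ y₂ ⟨l₂, hl₂, rfl⟩
    exact ⟨l₁ + l₂, by linarith, by rw [add_smul]⟩
  · -- recc C + recc C ⊆ recc C
    intro d₁ hd₁ d₂ hd₂
    exact recc_add' hd₁ hd₂
  · -- conv UL ⊆ conv UR + K
    apply convexHull_min ?_ ((convex_convexHull ℝ _).add ?_)
    swap
    · rintro y₁ ⟨l₁, hl₁, rfl⟩ y₂ ⟨l₂, hl₂, rfl⟩ a b ha hb hab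
      refine ⟨a * l₁ + b * l₂, ?_, ?_⟩
      · nlinarith
      · rw [add_smul, mul_smul, mul_smul]
    intro p hp
    simp only [Set.mem_iUnion] at hp
    obtain ⟨j, hj, l, hl0, hlP, rfl⟩ := hp
    obtain ⟨hj1, hj2, hj3, hj4⟩ := hj
    set aj : ℝ := (lamM xb (r j) C).toReal with haj
    set bj : ℝ := (lamP xb (r j) C).toReal with hbj
    have hjMne : lamM xb (r j) C ≠ ⊥ := ne_of_gt (lt_of_le_of_lt bot_le hj1)
    have hjPne : lamP xb (r j) C ≠ ⊥ := ne_of_gt (lt_of_le_of_lt bot_le (lt_trans hj1 hj3))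
    have hajeq : ((aj : ℝ) : EReal) = lamM xb (r j) C := EReal.coe_toReal (ne_of_lt hj2) hjMne
    have hbjeq : ((bj : ℝ) : EReal) = lamP xb (r j) C := EReal.coe_toReal (ne_of_lt hj4) hjPne
    have haj0 : 0 < aj := by
      have := hj1; rw [← hajeq] at this; exact_mod_cast this
    have hajbj : aj < bj := by
      have := hj3; rw [← hajeq, ← hbjeq] at this; exact_mod_cast this
    have hlbj : l < bj := by
      rw [← hbjeq] at hlP; exact_mod_cast hlP
    -- choose l' with max aj l < l' < bj
    set l' : ℝ := (max aj l + bj) / 2 with hl'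
    have hmlt : max aj l < bj := max_lt hajbj hlbj
    have hal' : aj < l' := lt_of_le_of_lt (le_max_left aj l)
      (by rw [hl']; linarith [hmlt])
    have hll' : l < l' := lt_of_le_of_lt (le_max_right aj l)
      (by rw [hl']; linarith [hmlt])
    have hl'bj : l' < bj := by rw [hl']; linarith [hmlt]
    have hl'pos : 0 < l' := lt_trans haj0 hal'
    set s : ℝ := (ak + bk) / 2 with hs
    have haks : ak < s := by rw [hs]; linarith
    have hsbk : s < bk := by rw [hs]; linarith
    have hspos : 0 < s := lt_trans hak0 haks
    set t : ℝ := l / l' with ht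
    have ht0 : 0 ≤ t := div_nonneg hl0 hl'pos.le
    have ht1 : t < 1 := (div_lt_one hl'pos).mpr hll'
    -- the two generators of UR
    have hg1 : l' • r j ∈ ⋃ i ∈ N1set xb r C ∪ N2set xb r C,
        {y : Fin n → ℝ | ∃ m : ℝ, lamM xb (r i) C < (m : EReal) ∧
          (m : EReal) < lamP xb (r i) C ∧ y = m • r i} := by
      refine Set.mem_iUnion₂.mpr ⟨j, Or.inr ⟨hj1, hj2, hj3, hj4⟩, ⟨l', ?_, ?_, rfl⟩⟩
      · rw [← hajeq]; exact_mod_cast hal'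
      · rw [← hbjeq]; exact_mod_cast hl'bj
    have hg2 : s • r k ∈ ⋃ i ∈ N1set xb r C ∪ N2set xb r C,
        {y : Fin n → ℝ | ∃ m : ℝ, lamM xb (r i) C < (m : EReal) ∧
          (m : EReal) < lamP xb (r i) C ∧ y = m • r i} := by
      refine Set.mem_iUnion₂.mpr ⟨k, Or.inr ⟨hk1, hk2, hk3, hk4⟩, ⟨s, ?_, ?_, rfl⟩⟩
      · rw [← hakeq]; exact_mod_cast haks
      · rw [← hbkeq]; exact_mod_cast hsbk
    have hc : t • (l' • r j) + (1 - t) • (s • r k) ∈ convexHull ℝ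
        (⋃ i ∈ N1set xb r C ∪ N2set xb r C,
        {y : Fin n → ℝ | ∃ m : ℝ, lamM xb (r i) C < (m : EReal) ∧
          (m : EReal) < lamP xb (r i) C ∧ y = m • r i}) :=
      (convex_convexHull ℝ _) (subset_convexHull ℝ _ hg1) (subset_convexHull ℝ _ hg2)
        ht0 (by linarith) (by ring)
    have hy : (-((1 - t) * s)) • r k ∈
        {y : Fin n → ℝ | ∃ m : ℝ, m ≤ 0 ∧ y = m • r k} := by
      refine ⟨-((1 - t) * s), ?_, rfl⟩
      nlinarith
    have heq : l • r j = t • (l' • r j) + (1 - t) • (s • r k) + (-((1 - t) * s)) • r k := by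
      have htl : t * l' = l := by rw [ht]; field_simp
      rw [← htl]
      module
    rw [heq]
    exact Set.add_mem_add hc hy
  · -- conv UR ⊆ conv UL + recc C
    apply convexHull_min ?_ ((convex_convexHull ℝ _).add (recc_convex' C))
    intro p hp
    simp only [Set.mem_iUnion] at hp
    obtain ⟨j, hj, l, hlM, hlP, rfl⟩ := hp
    rcases hj with hj1 | hj2
    · -- j ∈ N₁ : l • r j is a recession direction
      obtain ⟨hm0, hmT, hPtop⟩ := hj1
      have hl0 : 0 < l := by
        have : (0 : EReal) < (l : EReal) := lt_trans hm0 hlM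
        exact_mod_cast this
      have hrj : r j ∈ recc C := ray_mem_recc hCopen hCconv hPtop
      have hd : l • r j ∈ recc C := recc_smul' hrj hl0.le
      have h0c : (0 : Fin n → ℝ) ∈ convexHull ℝ (⋃ i ∈ N2set xb r C,
          {y : Fin n → ℝ | ∃ m : ℝ, 0 ≤ m ∧ (m : EReal) < lamP xb (r i) C ∧ y = m • r i}) :=
        subset_convexHull ℝ _ h0UL
      have := Set.add_mem_add h0c hd
      rwa [zero_add] at this
    · -- j ∈ N₂ : l • r j is already a generator of UL
      obtain ⟨hm0, hmT, hmP, hPT⟩ := hj2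
      have hl0 : 0 < l := by
        have : (0 : EReal) < (l : EReal) := lt_trans hm0 hlM
        exact_mod_cast this
      have hmem : l • r j ∈ ⋃ i ∈ N2set xb r C,
          {y : Fin n → ℝ | ∃ m : ℝ, 0 ≤ m ∧ (m : EReal) < lamP xb (r i) C ∧ y = m • r i} :=
        Set.mem_iUnion₂.mpr ⟨j, ⟨hm0, hmT, hmP, hPT⟩, ⟨l, hl0.le, hlP, rfl⟩⟩
      have := Set.add_mem_add (subset_convexHull ℝ _ hmem) (recc_zero' C)
      rwa [add_zero] at this
end
end
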